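/- The conclusion of the minimal-harmonic-mean lemma fails for non-integer scalings: in ℝ², with Q = Q(0,1), fixed 1/2 < r < 1, Q' = Q(0, 2r−1), and p(x) = 2 on Q' and 1 on Q ∖ Q', every cube Q(x,r) ⊂ Q contains Q', so all such cubes have harmonic mean p_{Q(x,r)} = 2r²/(4r−2r²−1), while the full cube has p_Q = 2/(4r−4r²+1), and p_Q ≤ p_{Q(x,r)}. -/

import Mathlib

open MeasureTheory ENNReal Set Classical

/-- The (closed) square `Q(c,r)` with center `c`, radius `r` (side length `2r`). -/
def cube {n : ℕ} (c : Fin n → ℝ) (r : ℝ) : Set (Fin n → ℝ) := {y | ∀ i, |y i - c i| ≤ r}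

/-- The harmonic mean `p_F = (avg_F 1/p)⁻¹` of `p` on `F`. -/
noncomputable def harmMean {n : ℕ} (p : (Fin n → ℝ) → ℝ) (F : Set (Fin n → ℝ)) : ℝ :=
  (⨍ x in F, (p x)⁻¹ ∂volume)⁻¹

/-- The exponent of the counterexample: `p = 2` on `Q' = Q(0,2r−1)`, `1` elsewhere. -/
noncomputable def pEx (r : ℝ) : (Fin 2 → ℝ) → ℝ := fun x =>
  if x ∈ cube (0 : Fin 2 → ℝ) (2 * r - 1) then 2 else 1

/-! Every admissible centre `x` satisfies `|xᵢ| ≤ 1 - r`, so `Q(x,r)` contains `Q(0, 2r-1)`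
and the average of `1/p` over `Q(x,r)` only depends on the ratio of the areas of the two
squares. The harmonic means are then explicit, and the inequality between them reduces to
`(1 - r)(2r - 1)²(1 + r) ≥ 0`. -/

section Cube

variable {n : ℕ}

lemma cube_eq_pi (c : Fin n → ℝ) (r : ℝ) :
    cube c r = univ.pi fun i => Icc (c i - r) (c i + r) := by
  ext y
  simp only [cube, mem_ofPred_eq, mem_univ_pi, mem_Icc, abs_le]
  exact forall_congr' fun i => by
    constructor <;> rintro ⟨h₁, h₂⟩ <;> constructor <;> linarith

lemma measurableSet_cube (c : Fin n → ℝ) (r : ℝ) : MeasurableSet (cube c r) := by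
  rw [cube_eq_pi]
  exact MeasurableSet.univ_pi fun _ => measurableSet_Icc

lemma volume_cube (c : Fin n → ℝ) (r : ℝ) :
    volume (cube c r) = ENNReal.ofReal (2 * r) ^ n := by
  simp only [cube_eq_pi, volume_pi_pi, Real.volume_Icc, add_sub_sub_cancel, ← two_mul,
    Finset.prod_const, Finset.card_univ, Fintype.card_fin]

lemma volume_cube_ne_top (c : Fin n → ℝ) (r : ℝ) : volume (cube c r) ≠ ⊤ := by
  rw [volume_cube]
  exact pow_ne_top ofReal_ne_top

lemma measureReal_cube (c : Fin n → ℝ) {r : ℝ} (hr : 0 ≤ r) :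
    volume.real (cube c r) = (2 * r) ^ n := by
  rw [measureReal_def, volume_cube, toReal_pow, toReal_ofReal (by linarith)]

lemma cube_mono (c : Fin n → ℝ) {r s : ℝ} (h : r ≤ s) : cube c r ⊆ cube c s :=
  fun _ hy i => (hy i).trans h

lemma cube_subset_cube_iff {x c : Fin n → ℝ} {r s : ℝ} (hr : 0 ≤ r) :
    cube x r ⊆ cube c s ↔ ∀ i, |x i - c i| + r ≤ s := by
  have hne : (univ.pi fun i => Icc (x i - r) (x i + r)).Nonempty :=
    univ_pi_nonempty_iff.2 fun i => nonempty_Icc.2 (by linarith)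
  simp only [cube_eq_pi, pi_subset_pi_iff, hne.ne_empty, or_false, mem_univ, true_imp_iff]
  refine forall_congr' fun i => ?_
  rw [Icc_subset_Icc_iff (by linarith), iff_comm, ← le_sub_iff_add_le, abs_le]
  constructor <;> rintro ⟨h₁, h₂⟩ <;> constructor <;> linarith

lemma cube_two_mul_sub_subset {x c : Fin n → ℝ} {r s : ℝ} (hr : 0 ≤ r)
    (h : cube x r ⊆ cube c s) : cube c (2 * r - s) ⊆ cube x r := by
  rw [cube_subset_cube_iff hr] at h
  intro y hy i
  linarith [abs_sub_le (y i) (c i) (x i), abs_sub_comm (c i) (x i), hy i, h i]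

end Cube

lemma setIntegral_ite_mem {α : Type*} [MeasurableSpace α] {μ : Measure α} {A F : Set α}
    (hA : MeasurableSet A) (hAF : A ⊆ F) (hF : μ F ≠ ⊤) (a b : ℝ) :
    ∫ x in F, (if x ∈ A then a else b) ∂μ = μ.real A * a + (μ.real F - μ.real A) * b := by
  have hsplit :
      (fun x => if x ∈ A then a else b) = fun x => b + A.indicator (fun _ => a - b) x := by
    ext x
    by_cases hx : x ∈ A <;> simp [hx]
  have hb : IntegrableOn (fun _ => b) F μ := integrableOn_const hF
  have hab : IntegrableOn (A.indicator fun _ => a - b) F μ := (integrableOn_const hF).indicator hA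
  rw [hsplit, integral_add hb hab,
    setIntegral_const, setIntegral_indicator hA, setIntegral_const, inter_eq_right.2 hAF,
    smul_eq_mul, smul_eq_mul]
  ring

lemma harmMean_pEx_cube {r s : ℝ} (hr : 1 / 2 ≤ r) (hs : 0 < s) (c : Fin 2 → ℝ)
    (h : cube 0 (2 * r - 1) ⊆ cube c s) :
    harmMean (pEx r) (cube c s) = 2 * s ^ 2 / (2 * s ^ 2 - (2 * r - 1) ^ 2) := by
  have hinv (x) : (pEx r x)⁻¹ = if x ∈ cube 0 (2 * r - 1) then 2⁻¹ else 1⁻¹ := by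
    unfold pEx; split_ifs <;> rfl
  have havg : ⨍ x in cube c s, (pEx r x)⁻¹ = (2 * s ^ 2 - (2 * r - 1) ^ 2) / (2 * s ^ 2) := by
    rw [setAverage_eq, funext hinv, setIntegral_ite_mem (measurableSet_cube _ _) h
      (volume_cube_ne_top _ _), measureReal_cube _ hs.le, measureReal_cube _ (by linarith),
      smul_eq_mul]
    field_simp
    ring
  rw [harmMean, havg, inv_div]

lemma two_div_le_two_mul_sq_div {r : ℝ} (hr₁ : 1 / 2 < r) (hr₂ : r < 1) :
    2 / (4 * r - 4 * r ^ 2 + 1) ≤ 2 * r ^ 2 / (4 * r - 2 * r ^ 2 - 1) := by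
  have hden₁ : 0 < 4 * r - 4 * r ^ 2 + 1 := by nlinarith
  have hden₂ : 0 < 4 * r - 2 * r ^ 2 - 1 := by nlinarith
  rw [div_le_div_iff₀ hden₁ hden₂]
  -- the difference of the two sides is `2 (1 - r) (2r - 1)² (1 + r)`
  nlinarith [mul_nonneg (mul_nonneg (sub_nonneg.2 hr₂.le) (sq_nonneg (2 * r - 1)))
    (by linarith : (0 : ℝ) ≤ 1 + r)]

/-- In `ℝ²`, with `Q = Q(0,1)`, `1/2 < r < 1`, `Q' = Q(0,2r−1)`, and
`p = 2χ_{Q'} + χ_{Q∖Q'}`: every cube `Q(x,r) ⊆ Q` contains `Q'`; all such cubes have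
harmonic mean `2r²/(4r−2r²−1)`; the full cube has `p_Q = 2/(4r−4r²+1)`; and
`p_Q ≤ p_{Q(x,r)}` — so the minimal-harmonic-mean lemma fails for non-integer scalings. -/
theorem stmt10 (r : ℝ) (hr1 : 1 / 2 < r) (hr2 : r < 1) :
    (∀ x : Fin 2 → ℝ, cube x r ⊆ cube (0 : Fin 2 → ℝ) 1 →
        cube (0 : Fin 2 → ℝ) (2 * r - 1) ⊆ cube x r)
      ∧ (∀ x : Fin 2 → ℝ, cube x r ⊆ cube (0 : Fin 2 → ℝ) 1 →
          harmMean (pEx r) (cube x r) = 2 * r ^ 2 / (4 * r - 2 * r ^ 2 - 1))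
      ∧ harmMean (pEx r) (cube (0 : Fin 2 → ℝ) 1) = 2 / (4 * r - 4 * r ^ 2 + 1)
      ∧ ∀ x : Fin 2 → ℝ, cube x r ⊆ cube (0 : Fin 2 → ℝ) 1 →
          harmMean (pEx r) (cube (0 : Fin 2 → ℝ) 1) ≤ harmMean (pEx r) (cube x r) := by
  have hr0 : 0 < r := by linarith
  have hcore : ∀ x : Fin 2 → ℝ, cube x r ⊆ cube 0 1 → cube 0 (2 * r - 1) ⊆ cube x r :=
    fun x h => cube_two_mul_sub_subset hr0.le h
  have hsmall : ∀ x : Fin 2 → ℝ, cube x r ⊆ cube 0 1 →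
      harmMean (pEx r) (cube x r) = 2 * r ^ 2 / (4 * r - 2 * r ^ 2 - 1) := fun x h => by
    rw [harmMean_pEx_cube hr1.le hr0 x (hcore x h)]
    congr 1
    ring
  have hfull : harmMean (pEx r) (cube 0 1) = 2 / (4 * r - 4 * r ^ 2 + 1) := by
    rw [harmMean_pEx_cube hr1.le one_pos 0 (cube_mono 0 (by linarith))]
    congr 1 <;> ring
  refine ⟨hcore, hsmall, hfull, fun x h => ?_⟩
  rw [hfull, hsmall x h]
  exact two_div_le_two_mul_sq_div hr1 hr2
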